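/- arXiv:2505.08722 — 7 statements merged into one kernel-verified Lean document; each statement's English description precedes it below -/
import Mathlib

section
/- Let I be a monomial ideal in S = k[x1,...,xn] with minimal monomial generators m1,...,mq. If for each i there is a variable x_{j_i} and a positive integer n_i such that x_{j_i}^{n_i} divides m_i but x_{j_i}^{n_i} does not divide m_j for any j ≠ i, then the LCM lattice of I is isomorphic to the Boolean lattice on q elements. -/
/-!
`A ↦ lcm(m_a : a ∈ A)` maps the Boolean lattice monotonically onto the LCM lattice, so it
suffices that `m_i ∣ lcm(m_a : a ∈ A)` forces `i ∈ A`. This is what the private power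
`x_{j_i}^{n_i}` of `m_i` gives: it divides the lcm, hence, being a power of a single
variable, one of the `m_a`, and no generator other than `m_i` is divisible by it.
-/

namespace Finset

variable {ι α : Type*} [SemilatticeSup α] [OrderBot α]

theorem sup_le_sup_iff_subset {m : ι → α} (hm : ∀ (A : Finset ι) i, m i ≤ A.sup m → i ∈ A)
    {A B : Finset ι} : A.sup m ≤ B.sup m ↔ A ⊆ B :=
  ⟨fun h _ hi => hm B _ ((le_sup hi).trans h), fun h => sup_mono h⟩

noncomputable def supOrderIso (m : ι → α) (hm : ∀ (A : Finset ι) i, m i ≤ A.sup m → i ∈ A) :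
    Finset ι ≃o {a : α // ∃ A : Finset ι, a = A.sup m} :=
  OrderIso.ofSurjective
    (OrderEmbedding.ofMapLEIff (fun A => ⟨A.sup m, A, rfl⟩)
      fun _ _ => sup_le_sup_iff_subset hm)
    (by rintro ⟨_, A, rfl⟩; exact ⟨A, rfl⟩)

theorem mem_of_le_sup_of_private {σ β : Type*} [LinearOrder β] [OrderBot β]
    {m : ι → σ → β} {i : ι} {j : σ} {b : β} (hb : ⊥ < b) (hbi : b ≤ m i j)
    (hother : ∀ i', i' ≠ i → ¬ b ≤ m i' j) {A : Finset ι} (h : m i ≤ A.sup m) : i ∈ A := by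
  have hbA : b ≤ A.sup (fun a => m a j) := by simpa only [Finset.sup_apply] using hbi.trans (h j)
  obtain ⟨a, ha, hba⟩ := (Finset.le_sup_iff hb).1 hbA
  obtain rfl : a = i := by_contra fun hai => hother a hai hba
  exact ha

end Finset

theorem boolean_lcm_lattice_general (n q : ℕ) (m : Fin q → Fin n → ℕ)
    (hvar : ∀ i : Fin q, ∃ j : Fin n, ∃ ni : ℕ, 0 < ni ∧ ni ≤ m i j ∧
      ∀ i' : Fin q, i' ≠ i → ¬ ni ≤ m i' j) :
    Nonempty ({f : Fin n → ℕ // ∃ A : Finset (Fin q), f = A.sup m} ≃o Finset (Fin q)) := by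
  refine ⟨(Finset.supOrderIso m fun A i h => ?_).symm⟩
  obtain ⟨j, ni, hpos, hni, hother⟩ := hvar i
  exact Finset.mem_of_le_sup_of_private hpos hni hother h

/-- Monomials in `k[x_1,…,x_n]` are identified with exponent vectors `Fin n → ℕ`;
divisibility is the pointwise order, and lcm is the pointwise sup.  The LCM lattice of
the monomial ideal with minimal generators `m 0, …, m (q-1)` is the set of sups of
subsets of the generators (the empty sup being `0`, i.e. the monomial `1`), ordered by
divisibility. -/
theorem boolean_lcm_lattice (n q : ℕ) (m : Fin q → Fin n → ℕ)
    (hmin : ∀ i j : Fin q, i ≠ j → ¬ m i ≤ m j)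
    (hvar : ∀ i : Fin q, ∃ j : Fin n, ∃ ni : ℕ, 0 < ni ∧ ni ≤ m i j ∧
      ∀ i' : Fin q, i' ≠ i → ¬ ni ≤ m i' j) :
    Nonempty ({f : Fin n → ℕ // ∃ A : Finset (Fin q), f = A.sup m} ≃o Finset (Fin q)) :=
  boolean_lcm_lattice_general n q m hvar
end

section
/- Let G be a finite simple connected graph with at least one edge. If the LCM lattice of the edge ideal I(G) is graded, then the complement graph G^c contains no induced 4-cycle (equivalently, G is gap-free: G has no induced subgraph consisting of two disjoint edges). -/
/-! If `{a, b}` and `{c, d}` form a gap and some vertex `e` is adjacent to both `a` and `c`, then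
`{a, b, c, d, e}` is the top of two maximal chains from `∅` of different lengths,
`∅ ⋖ {a, b} ⋖ {a, b, c, d} ⋖ {a, b, c, d, e}` and
`∅ ⋖ {c, e} ⋖ {a, c, e} ⋖ {a, c, d, e} ⋖ {a, b, c, d, e}`, so no rank function exists.
In a connected graph, the first step `a - e` of a walk from `a` to `c` either gives such an `e`
(possibly after swapping `c` and `d`) or a gap `{e, a}, {c, d}` with a shorter walk to `c`. -/

/-- A finset of vertices is a union of edges of `G` (i.e. corresponds to an induced
subgraph without isolated vertices) if every vertex in it has a neighbor in it. -/
def IsUnionOfEdges {V : Type*} (G : SimpleGraph V) (S : Finset V) : Prop :=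
  ∀ v ∈ S, ∃ w ∈ S, G.Adj v w

/-- The LCM lattice of the edge ideal `I(G)`: its elements correspond to unions of
edges of `G`, ordered by inclusion. -/
abbrev EdgeLcmLattice {V : Type*} (G : SimpleGraph V) : Type _ :=
  {S : Finset V // IsUnionOfEdges G S}

/-- A finite lattice is graded if there is an order-preserving `ρ` increasing by
exactly 1 along covers. -/
def IsGradedOrder (L : Type*) [Preorder L] : Prop :=
  ∃ ρ : L → ℤ, (∀ x y : L, x < y → ρ x < ρ y) ∧ ∀ x y : L, x ⋖ y → ρ y = ρ x + 1

/-- `G` is gap-free: no induced subgraph consisting of two disjoint edges. -/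
def GapFree {V : Type*} (G : SimpleGraph V) : Prop :=
  ¬ ∃ a b c d : V, G.Adj a b ∧ G.Adj c d ∧ a ≠ c ∧ a ≠ d ∧ b ≠ c ∧ b ≠ d ∧
    ¬ G.Adj a c ∧ ¬ G.Adj a d ∧ ¬ G.Adj b c ∧ ¬ G.Adj b d

namespace IsUnionOfEdges

variable {V : Type*} {G : SimpleGraph V}

theorem empty : IsUnionOfEdges G ∅ := fun _ hv => absurd hv (Finset.notMem_empty _)

variable [DecidableEq V] {S T : Finset V}

theorem union (hS : IsUnionOfEdges G S) (hT : IsUnionOfEdges G T) :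
    IsUnionOfEdges G (S ∪ T) := by
  intro v hv
  rcases Finset.mem_union.mp hv with hv | hv
  · obtain ⟨w, hw, hvw⟩ := hS v hv
    exact ⟨w, Finset.mem_union_left T hw, hvw⟩
  · obtain ⟨w, hw, hvw⟩ := hT v hv
    exact ⟨w, Finset.mem_union_right S hw, hvw⟩

theorem pair {a b : V} (hab : G.Adj a b) : IsUnionOfEdges G {a, b} := by
  intro v hv
  rcases Finset.mem_insert.mp hv with rfl | hv
  · exact ⟨b, by simp, hab⟩
  · rw [Finset.mem_singleton.mp hv]
    exact ⟨a, by simp, hab.symm⟩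

theorem insert (hS : IsUnionOfEdges G S) {v w : V} (hw : w ∈ S) (hvw : G.Adj v w) :
    IsUnionOfEdges G (insert v S) := by
  intro u hu
  rcases Finset.mem_insert.mp hu with rfl | hu
  · exact ⟨w, Finset.mem_insert_of_mem hw, hvw⟩
  · obtain ⟨x, hx, hux⟩ := hS u hu
    exact ⟨x, Finset.mem_insert_of_mem hx, hux⟩

end IsUnionOfEdges

namespace EdgeLcmLattice

variable {V : Type*} {G : SimpleGraph V}

instance : OrderBot (EdgeLcmLattice G) := Subtype.orderBot IsUnionOfEdges.empty

@[simp] theorem val_bot : (⊥ : EdgeLcmLattice G).val = ∅ := rfl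

variable [DecidableEq V]

def insertAdj (x : EdgeLcmLattice G) {v w : V} (hw : w ∈ x.val) (hvw : G.Adj v w) :
    EdgeLcmLattice G :=
  ⟨insert v x.val, x.2.insert hw hvw⟩

def unionEdge (x : EdgeLcmLattice G) {c d : V} (hcd : G.Adj c d) : EdgeLcmLattice G :=
  ⟨x.val ∪ {c, d}, x.2.union (.pair hcd)⟩

@[simp] theorem val_insertAdj (x : EdgeLcmLattice G) {v w : V} (hw : w ∈ x.val)
    (hvw : G.Adj v w) : (x.insertAdj hw hvw).val = insert v x.val := rfl

@[simp] theorem val_unionEdge (x : EdgeLcmLattice G) {c d : V} (hcd : G.Adj c d) :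
    (x.unionEdge hcd).val = x.val ∪ {c, d} := rfl

theorem covBy_insertAdj (x : EdgeLcmLattice G) {v w : V} (hw : w ∈ x.val) (hvw : G.Adj v w)
    (hv : v ∉ x.val) : x ⋖ x.insertAdj hw hvw :=
  CovBy.of_image (OrderEmbedding.subtype _) (Finset.covBy_insert hv)

/-- An element strictly between `x` and `x ∪ {c, d}` would contain exactly one of `c`, `d`,
which would then be isolated in it. -/
theorem covBy_unionEdge (x : EdgeLcmLattice G) {c d : V} (hcd : G.Adj c d)
    (hc : ∀ v ∈ x.val, ¬ G.Adj c v) (hd : ∀ v ∈ x.val, ¬ G.Adj d v) :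
    x ⋖ x.unionEdge hcd := by
  have hnew : ∀ u ∈ ({c, d} : Finset V), ∀ v ∈ x.val, ¬ G.Adj u v := by
    simp only [Finset.mem_insert, Finset.mem_singleton]
    rintro u (rfl | rfl)
    exacts [hc, hd]
  have hcx : c ∉ x.val := fun h => by
    obtain ⟨w, hw, hcw⟩ := x.2 c h
    exact hc w hw hcw
  refine ⟨?_, fun z hxz hzy => ?_⟩
  · refine lt_of_le_of_ne (Subtype.coe_le_coe.mp Finset.subset_union_left) fun h => hcx ?_
    rw [h]
    exact Finset.mem_union_right _ (by simp)
  obtain ⟨u, huz, hux⟩ := Finset.exists_of_ssubset (show x.val ⊂ z.val from hxz)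
  have hu : u ∈ ({c, d} : Finset V) :=
    (Finset.mem_union.mp ((Subtype.coe_le_coe.mpr hzy.le) huz)).resolve_left hux
  obtain ⟨w, hwz, huw⟩ := z.2 u huz
  have hw : w ∈ ({c, d} : Finset V) :=
    (Finset.mem_union.mp ((Subtype.coe_le_coe.mpr hzy.le) hwz)).resolve_left
      fun hwx => hnew u hu w hwx huw
  have hcdz : {c, d} ⊆ z.val := by
    simp only [Finset.mem_insert, Finset.mem_singleton] at hu hw
    rcases hu with rfl | rfl <;> rcases hw with rfl | rfl
    · exact absurd huw G.irrefl
    · simp [Finset.insert_subset_iff, huz, hwz]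
    · simp [Finset.insert_subset_iff, huz, hwz]
    · exact absurd huw G.irrefl
  exact hzy.not_ge (Subtype.coe_le_coe.mp (Finset.union_subset (Subtype.coe_le_coe.mpr hxz.le)
    hcdz))

end EdgeLcmLattice

section Gap

variable {V : Type*} {G : SimpleGraph V}

open EdgeLcmLattice

theorem not_isGradedOrder_of_gap_of_adj_of_adj {a b c d e : V} (hab : G.Adj a b)
    (hcd : G.Adj c d) (hac : ¬ G.Adj a c) (had : ¬ G.Adj a d) (hbc : ¬ G.Adj b c)
    (hbd : ¬ G.Adj b d) (hae : G.Adj a e) (hec : G.Adj e c) :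
    ¬ IsGradedOrder (EdgeLcmLattice G) := by
  classical
  rintro ⟨ρ, -, hρ⟩
  have hea : e ≠ a := hae.ne'
  have heb : e ≠ b := fun h => hbc (h ▸ hec)
  have hec' : e ≠ c := hec.ne
  have hed : e ≠ d := fun h => had (h ▸ hae)
  have hab' : a ≠ b := hab.ne
  have hcd' : c ≠ d := hcd.ne
  have hac' : a ≠ c := fun h => hbc (h ▸ hab.symm)
  have had' : a ≠ d := fun h => hbd (h ▸ hab.symm)
  have hbc' : b ≠ c := fun h => hac (h ▸ hab)
  have hbd' : b ≠ d := fun h => had (h ▸ hab)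
  let AB := (⊥ : EdgeLcmLattice G).unionEdge hab
  let ABCD := AB.unionEdge hcd
  let ABCDE := ABCD.insertAdj (w := a) (by simp [ABCD, AB]) hae.symm
  let CE := (⊥ : EdgeLcmLattice G).unionEdge hec.symm
  let ACE := CE.insertAdj (w := e) (by simp [CE]) hae
  let ACDE := ACE.insertAdj (w := c) (by simp [ACE, CE]) hcd.symm
  let ABCDE' := ACDE.insertAdj (w := a) (by simp [ACDE, ACE, CE]) hab.symm
  have htop : ABCDE = ABCDE' :=
    Subtype.ext (by ext; simp [ABCDE, ABCDE', ACDE, ACE, CE, ABCD, AB]; tauto)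
  have h1 : ρ AB = ρ ⊥ + 1 := hρ _ _ (covBy_unionEdge ⊥ hab (by simp) (by simp))
  have h2 : ρ ABCD = ρ AB + 1 := hρ _ _ (covBy_unionEdge AB hcd
    (by simp [AB, mt G.adj_symm hac, mt G.adj_symm hbc])
    (by simp [AB, mt G.adj_symm had, mt G.adj_symm hbd]))
  have h3 : ρ ABCDE = ρ ABCD + 1 := hρ _ _ (covBy_insertAdj ABCD _ hae.symm
    (by simp [ABCD, AB, hea, heb, hec', hed]))
  have h4 : ρ CE = ρ ⊥ + 1 := hρ _ _ (covBy_unionEdge ⊥ hec.symm (by simp) (by simp))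
  have h5 : ρ ACE = ρ CE + 1 := hρ _ _ (covBy_insertAdj CE _ hae
    (by simp [CE, hac', hea.symm]))
  have h6 : ρ ACDE = ρ ACE + 1 := hρ _ _ (covBy_insertAdj ACE _ hcd.symm
    (by simp [ACE, CE, had'.symm, hed.symm, hcd'.symm]))
  have h7 : ρ ABCDE' = ρ ACDE + 1 := hρ _ _ (covBy_insertAdj ACDE _ hab.symm
    (by simp [ACDE, ACE, CE, hab'.symm, heb.symm, hbc', hbd']))
  rw [htop] at h3
  omega

theorem not_isGradedOrder_of_gap_of_walk {a c : V} (p : G.Walk a c) {b d : V}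
    (hab : G.Adj a b) (hcd : G.Adj c d) (hac : ¬ G.Adj a c) (had : ¬ G.Adj a d)
    (hbc : ¬ G.Adj b c) (hbd : ¬ G.Adj b d) : ¬ IsGradedOrder (EdgeLcmLattice G) := by
  induction p generalizing b with
  | nil => exact absurd hab.symm hbc
  | @cons a e c hae p ih =>
    by_cases hec : G.Adj e c
    · exact not_isGradedOrder_of_gap_of_adj_of_adj hab hcd hac had hbc hbd hae hec
    by_cases hed : G.Adj e d
    · exact not_isGradedOrder_of_gap_of_adj_of_adj hab hcd.symm had hac hbd hbc hae hed
    exact ih hae.symm hcd hec hed hac had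

end Gap

theorem graded_lcm_lattice_implies_gapFree_general {V : Type*}
    (G : SimpleGraph V) (hconn : G.Connected)
    (hgraded : IsGradedOrder (EdgeLcmLattice G)) : GapFree G := by
  rintro ⟨a, b, c, d, hab, hcd, -, -, -, -, hac, had, hbc, hbd⟩
  obtain ⟨p⟩ := hconn.preconnected a c
  exact not_isGradedOrder_of_gap_of_walk p hab hcd hac had hbc hbd hgraded

theorem graded_lcm_lattice_implies_gapFree {V : Type*} [Fintype V]
    (G : SimpleGraph V) (hconn : G.Connected) (hnt : ∃ a b : V, G.Adj a b)
    (hgraded : IsGradedOrder (EdgeLcmLattice G)) : GapFree G :=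
  graded_lcm_lattice_implies_gapFree_general G hconn hgraded
end

section
/- Let G be a finite simple connected nontrivial graph that is not a star graph. The LCM lattice of the edge ideal I(G) is coatomic if and only if every vertex of G has degree at least 2. -/
/-- The largest union-of-edges subset of a vertex set `X`; the meet of a family of
elements of the LCM lattice is the `core` of the intersection of their vertex sets. -/
def core {V : Type*} [DecidableEq V] (G : SimpleGraph V) [DecidableRel G.Adj]
    (X : Finset V) : Finset V :=
  X.filter fun v => ∃ w ∈ X, G.Adj v w

/-- A coatom of the LCM lattice: an element covered by the top element `univ`. -/
def IsEdgeLatCoatom {V : Type*} [Fintype V] (G : SimpleGraph V)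
    (c : EdgeLcmLattice G) : Prop :=
  (c : Finset V) ≠ Finset.univ ∧ ∀ y : EdgeLcmLattice G, c < y → (y : Finset V) = Finset.univ

/-- The star graph on `n` vertices: vertex `0` is joined to all other vertices. -/
def starGraph (n : ℕ) : SimpleGraph (Fin n) :=
  SimpleGraph.fromRel fun a _ => (a : ℕ) = 0

section Star

variable {V : Type*} {G : SimpleGraph V}

lemma SimpleGraph.Reachable.of_forall_adj {P : V → Prop} (hP : ∀ a b, G.Adj a b → P a → P b)
    {a b : V} (hab : G.Reachable a b) (ha : P a) : P b := by
  obtain ⟨p⟩ := hab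
  induction p with
  | nil => exact ha
  | cons h _ ih => exact ih (hP _ _ h ha)

lemma SimpleGraph.Connected.eq_starGraph {u : V} (hconn : G.Connected)
    (h : ∀ a b, G.Adj u a → G.Adj a b → b = u) : G = SimpleGraph.starGraph u := by
  have hcenter : ∀ t, t = u ∨ G.Adj u t := fun t =>
    (hconn u t).of_forall_adj (P := fun t => t = u ∨ G.Adj u t)
      (fun a b hab => by rintro (rfl | ha); exacts [Or.inr hab, Or.inl (h a b ha hab)])
      (Or.inl rfl)
  ext a b
  rw [SimpleGraph.starGraph_adj]
  refine ⟨fun hab => ⟨hab.ne, (hcenter a).imp_right fun ha => h a b ha hab⟩, ?_⟩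
  rintro ⟨hne, rfl | rfl⟩
  · exact (hcenter b).resolve_left hne.symm
  · exact ((hcenter a).resolve_left hne).symm

lemma nonempty_iso_starGraph_card [Fintype V] (c : V) :
    Nonempty (SimpleGraph.starGraph c ≃g starGraph (Fintype.card V)) := by
  have : Nonempty V := ⟨c⟩
  have : NeZero (Fintype.card V) := ⟨Fintype.card_ne_zero⟩
  let e : V ≃ Fin (Fintype.card V) :=
    (Fintype.equivFin V).trans (Equiv.swap (Fintype.equivFin V c) 0)
  have he : ∀ a, ((e a : Fin _) : ℕ) = 0 ↔ a = c := fun a => by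
    rw [← Fin.val_zero (Fintype.card V), Fin.val_inj, ← e.apply_eq_iff_eq (y := c)]
    simp [e]
  refine ⟨⟨e, fun {a b} => ?_⟩⟩
  simp only [starGraph, SimpleGraph.fromRel_adj, SimpleGraph.starGraph_adj, he, ne_eq,
    EmbeddingLike.apply_eq_iff_eq]

lemma SimpleGraph.Connected.exists_adj_adj_ne [Fintype V] (hconn : G.Connected)
    (hnostar : ¬ ∃ n : ℕ, Nonempty (G ≃g _root_.starGraph n)) (u : V) :
    ∃ z y, G.Adj u z ∧ G.Adj z y ∧ y ≠ u := by
  by_contra! h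
  rw [hconn.eq_starGraph h] at hnostar
  exact hnostar ⟨_, nonempty_iso_starGraph_card u⟩

end Star

section Core

variable {V : Type*} [DecidableEq V] {G : SimpleGraph V} [DecidableRel G.Adj]

lemma mem_core {X : Finset V} {v : V} : v ∈ core G X ↔ v ∈ X ∧ ∃ w ∈ X, G.Adj v w :=
  Finset.mem_filter

lemma core_isUnionOfEdges (X : Finset V) : IsUnionOfEdges G (core G X) := by
  intro v hv
  obtain ⟨hvX, w, hwX, hvw⟩ := mem_core.1 hv
  exact ⟨w, mem_core.2 ⟨hwX, v, hvX, hvw.symm⟩, hvw⟩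

lemma IsUnionOfEdges.core_eq {S : Finset V} (hS : IsUnionOfEdges G S) : core G S = S :=
  Finset.filter_true_of_mem hS

end Core

section LcmLattice

variable {V : Type*} [Fintype V] [DecidableEq V] {G : SimpleGraph V}

lemma isEdgeLatCoatom_of_coe_eq_compl_singleton {c : EdgeLcmLattice G} {w : V}
    (hc : (c : Finset V) = {w}ᶜ) : IsEdgeLatCoatom G c := by
  refine ⟨fun h => ?_, fun y hcy => ?_⟩
  · have hw : w ∈ (c : Finset V) := h ▸ Finset.mem_univ w
    simp [hc] at hw
  obtain ⟨t, hty, htc⟩ := Finset.exists_of_ssubset (Subtype.coe_lt_coe.2 hcy)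
  obtain rfl : t = w := by simpa [hc] using htc
  refine Finset.eq_univ_of_forall fun a => ?_
  by_cases haw : a = t
  · exact haw ▸ hty
  · exact hcy.le (by simp [hc, haw])

lemma isUnionOfEdges_compl_singleton_of_leaf {u v z y : V} (hnbr : ∀ w, ∃ t, G.Adj w t)
    (hleaf : ∀ w, G.Adj v w → w = u) (huz : G.Adj u z) (hzy : G.Adj z y) (hyu : y ≠ u) :
    IsUnionOfEdges G {v}ᶜ := by
  intro w hw
  obtain ⟨t, hwt⟩ := hnbr w
  by_cases htv : t = v
  · obtain rfl : w = u := hleaf w (htv ▸ hwt.symm)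
    have hzv : z ≠ v := by
      rintro rfl
      exact hyu (hleaf y hzy)
    exact ⟨z, by simpa using hzv, huz⟩
  · exact ⟨t, by simpa using htv, hwt⟩

lemma IsEdgeLatCoatom.mem_of_leaf {u v : V} {c : EdgeLcmLattice G} (hc : IsEdgeLatCoatom G c)
    (hvu : G.Adj v u) (hleaf : ∀ w, G.Adj v w → w = u) (hU : IsUnionOfEdges G {v}ᶜ) :
    u ∈ (c : Finset V) := by
  by_contra huc
  have hvc : v ∉ (c : Finset V) := fun hvc => by
    obtain ⟨w, hwc, hvw⟩ := c.2 v hvc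
    exact huc (hleaf w hvw ▸ hwc)
  have hlt : c < ⟨{v}ᶜ, hU⟩ := Subtype.coe_lt_coe.1 <|
    Finset.ssubset_iff_subset_ne.2
      ⟨fun t ht => Finset.mem_compl.2 fun htv => hvc (Finset.mem_singleton.1 htv ▸ ht),
        fun h => huc (h ▸ by simpa using hvu.ne')⟩
  simpa using (hc.2 _ hlt).ge (Finset.mem_univ v)

variable [DecidableRel G.Adj]

variable (G) in
def IsMeetOfCoatoms (x : EdgeLcmLattice G) : Prop :=
  ∃ s : Finset (EdgeLcmLattice G), (∀ c ∈ s, IsEdgeLatCoatom G c) ∧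
    (x : Finset V) = core G (s.inf fun c => (c : Finset V))

lemma isUnionOfEdges_compl_singleton_of_two_le_degree (hdeg : ∀ v, 2 ≤ G.degree v) (w : V) :
    IsUnionOfEdges G {w}ᶜ := fun t _ => by
  obtain ⟨a, ha, haw⟩ := Finset.exists_mem_ne (hdeg t) w
  exact ⟨a, Finset.mem_compl.2 (by simpa using haw), (G.mem_neighborFinset t a).1 ha⟩

lemma isMeetOfCoatoms_of_forall_isUnionOfEdges_compl_singleton
    (h : ∀ w, IsUnionOfEdges G {w}ᶜ) (x : EdgeLcmLattice G) : IsMeetOfCoatoms G x := by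
  let coatom (w : V) : EdgeLcmLattice G := ⟨{w}ᶜ, h w⟩
  refine ⟨(x : Finset V)ᶜ.image coatom, ?_, ?_⟩
  · simp only [Finset.mem_image]
    rintro c ⟨w, -, rfl⟩
    exact isEdgeLatCoatom_of_coe_eq_compl_singleton rfl
  · have hinf : ((x : Finset V)ᶜ.inf fun w => ({w}ᶜ : Finset V)) = x := by
      ext t
      simp only [Finset.mem_inf, Finset.mem_compl, Finset.mem_singleton]
      exact ⟨fun ht => by_contra fun htx => ht t htx rfl, fun htx w hw htw => hw (htw ▸ htx)⟩
    rw [Finset.inf_image]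
    exact (congrArg (core G) hinf ▸ x.2.core_eq).symm

lemma not_isMeetOfCoatoms_core_compl_singleton {u v z y : V} (hnbr : ∀ w, ∃ t, G.Adj w t)
    (hvu : G.Adj v u) (hleaf : ∀ w, G.Adj v w → w = u)
    (huz : G.Adj u z) (hzy : G.Adj z y) (hyu : y ≠ u) :
    ¬ IsMeetOfCoatoms G ⟨core G {u}ᶜ, core_isUnionOfEdges _⟩ := by
  rintro ⟨s, hs, hx : core G {u}ᶜ = _⟩
  have hU := isUnionOfEdges_compl_singleton_of_leaf hnbr hleaf huz hzy hyu
  have hu : u ∈ s.inf fun c => (c : Finset V) :=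
    Finset.mem_inf.2 fun c hc => (hs c hc).mem_of_leaf hvu hleaf hU
  have hz : z ∈ core G {u}ᶜ := mem_core.2 ⟨by simpa using huz.ne', y, by simpa using hyu, hzy⟩
  have hucore : u ∈ core G (s.inf fun c => (c : Finset V)) :=
    mem_core.2 ⟨hu, z, (mem_core.1 (hx ▸ hz)).1, huz⟩
  rw [← hx] at hucore
  simpa using (mem_core.1 hucore).1

end LcmLattice

/-- For a connected nontrivial non-star graph `G`, the LCM lattice of `I(G)` is
coatomic (every element is a meet of coatoms) iff every vertex has degree at least 2. -/
theorem coatomic_edge_lcm_lattice_iff_min_degree_two {V : Type*} [Fintype V]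
    [DecidableEq V] (G : SimpleGraph V) [DecidableRel G.Adj]
    (hconn : G.Connected) (hnt : ∃ a b : V, G.Adj a b)
    (hnostar : ¬ ∃ n : ℕ, Nonempty (G ≃g starGraph n)) :
    (∀ x : EdgeLcmLattice G, ∃ s : Finset (EdgeLcmLattice G),
        (∀ c ∈ s, IsEdgeLatCoatom G c) ∧
        (x : Finset V) = core G (s.inf fun c => (c : Finset V))) ↔
      ∀ v : V, 2 ≤ G.degree v := by
  change (∀ x, IsMeetOfCoatoms G x) ↔ _
  obtain ⟨a, b, hab⟩ := hnt
  have : Nontrivial V := ⟨⟨a, b, hab.ne⟩⟩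
  have hdeg_pos (w : V) : 0 < G.degree w := hconn.preconnected.degree_pos_of_nontrivial w
  refine ⟨fun hco => ?_, fun hdeg =>
    isMeetOfCoatoms_of_forall_isUnionOfEdges_compl_singleton
      (isUnionOfEdges_compl_singleton_of_two_le_degree hdeg)⟩
  by_contra! ⟨v, hv⟩
  have hv1 : G.degree v = 1 := by have := hdeg_pos v; omega
  obtain ⟨u, hvu, hleaf⟩ := SimpleGraph.degree_eq_one_iff_existsUnique_adj.1 hv1
  obtain ⟨z, y, huz, hzy, hyu⟩ := hconn.exists_adj_adj_ne hnostar u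
  exact not_isMeetOfCoatoms_core_compl_singleton
    (fun w => (G.degree_pos_iff_exists_adj w).1 (hdeg_pos w)) hvu hleaf huz hzy hyu (hco _)
end

section
/- Let G be a finite simple graph with a clique H such that every vertex of G not in H is adjacent to exactly one vertex of H, and no two such outside vertices are adjacent to each other. Then G is gap-free, C4-free, and diamond-free. -/
/-- `G` is `C4`-free: no induced 4-cycle. -/
def C4Free {V : Type*} (G : SimpleGraph V) : Prop :=
  ¬ ∃ a b c d : V, a ≠ c ∧ b ≠ d ∧ G.Adj a b ∧ G.Adj b c ∧ G.Adj c d ∧ G.Adj d a ∧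
    ¬ G.Adj a c ∧ ¬ G.Adj b d

/-- `G` is diamond-free: no induced `K4` minus an edge. -/
def DiamondFree {V : Type*} (G : SimpleGraph V) : Prop :=
  ¬ ∃ a b c d : V, b ≠ d ∧ G.Adj a b ∧ G.Adj b c ∧ G.Adj c d ∧ G.Adj d a ∧
    G.Adj a c ∧ ¬ G.Adj b d

namespace SimpleGraph

variable {V : Type*} {G : SimpleGraph V} {s : Set V}

theorem mem_of_adj_of_isIndepSet_compl (hi : G.IsIndepSet sᶜ) {x y : V} (hxy : G.Adj x y)
    (hx : x ∉ s) : y ∈ s := by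
  by_contra hy
  exact hi hx hy hxy.ne hxy

theorem gapFree_of_isClique_of_isIndepSet_compl (hc : G.IsClique s) (hi : G.IsIndepSet sᶜ) :
    GapFree G := by
  rintro ⟨a, b, c, d, hab, hcd, hac, had, hbc, hbd, nac, nad, nbc, nbd⟩
  by_cases ha : a ∈ s <;> by_cases hc' : c ∈ s
  · exact nac (hc ha hc' hac)
  · exact nad (hc ha (mem_of_adj_of_isIndepSet_compl hi hcd hc') had)
  · exact nbc (hc (mem_of_adj_of_isIndepSet_compl hi hab ha) hc' hbc)
  · exact nbd (hc (mem_of_adj_of_isIndepSet_compl hi hab ha)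
      (mem_of_adj_of_isIndepSet_compl hi hcd hc') hbd)

theorem c4Free_of_isClique_of_isIndepSet_compl (hc : G.IsClique s) (hi : G.IsIndepSet sᶜ) :
    C4Free G := by
  rintro ⟨a, b, c, d, hac, hbd, hab, hbc, hcd, hda, nac, nbd⟩
  by_cases ha : a ∈ s
  · by_cases hc' : c ∈ s
    · exact nac (hc ha hc' hac)
    · exact nbd (hc (mem_of_adj_of_isIndepSet_compl hi hbc.symm hc')
        (mem_of_adj_of_isIndepSet_compl hi hcd hc') hbd)
  · exact nbd (hc (mem_of_adj_of_isIndepSet_compl hi hab ha)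
      (mem_of_adj_of_isIndepSet_compl hi hda.symm ha) hbd)

theorem diamondFree_of_isClique_of_isIndepSet_compl (hc : G.IsClique s) (hi : G.IsIndepSet sᶜ)
    (huniq : ∀ v ∉ s, (G.neighborSet v ∩ s).Subsingleton) : DiamondFree G := by
  have mem_of_triangle : ∀ {a b c}, G.Adj a b → G.Adj b c → G.Adj a c → b ∈ s := by
    intro a b c hab hbc hac
    by_contra hb
    exact hac.ne <| huniq b hb ⟨hab.symm, mem_of_adj_of_isIndepSet_compl hi hab.symm hb⟩
      ⟨hbc, mem_of_adj_of_isIndepSet_compl hi hbc hb⟩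
  rintro ⟨a, b, c, d, hbd, hab, hbc, hcd, hda, hac, nbd⟩
  exact nbd (hc (mem_of_triangle hab hbc hac) (mem_of_triangle hda.symm hcd.symm hac) hbd)

end SimpleGraph

open SimpleGraph in
theorem gapFree_c4Free_diamondFree_of_clique_structure_general {V : Type*} (G : SimpleGraph V) (H : Finset V)
    (hclique : ∀ u ∈ H, ∀ v ∈ H, u ≠ v → G.Adj u v)
    (hout : ∀ v : V, v ∉ H → ∃! w : V, w ∈ H ∧ G.Adj v w)
    (hnoout : ∀ v w : V, v ∉ H → w ∉ H → ¬ G.Adj v w) :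
    GapFree G ∧ C4Free G ∧ DiamondFree G := by
  have hc : G.IsClique (H : Set V) := fun u hu v hv huv => hclique u hu v hv huv
  have hi : G.IsIndepSet (H : Set V)ᶜ := fun v hv w hw _ => hnoout v w hv hw
  have huniq : ∀ v ∉ (H : Set V), (G.neighborSet v ∩ H).Subsingleton := by
    intro v hv x hx y hy
    obtain ⟨w, -, hw⟩ := hout v hv
    exact (hw x ⟨hx.2, hx.1⟩).trans (hw y ⟨hy.2, hy.1⟩).symm
  exact ⟨gapFree_of_isClique_of_isIndepSet_compl hc hi, c4Free_of_isClique_of_isIndepSet_compl hc hi,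
    diamondFree_of_isClique_of_isIndepSet_compl hc hi huniq⟩

/-- If `G` has a clique `H` such that every vertex outside `H` is adjacent to exactly
one vertex of `H`, and no two outside vertices are adjacent, then `G` is gap-free,
`C4`-free and diamond-free. -/
theorem gapFree_c4Free_diamondFree_of_clique_structure {V : Type*} [Fintype V]
    [DecidableEq V] (G : SimpleGraph V) (H : Finset V)
    (hclique : ∀ u ∈ H, ∀ v ∈ H, u ≠ v → G.Adj u v)
    (hout : ∀ v : V, v ∉ H → ∃! w : V, w ∈ H ∧ G.Adj v w)
    (hnoout : ∀ v w : V, v ∉ H → w ∉ H → ¬ G.Adj v w) :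
    GapFree G ∧ C4Free G ∧ DiamondFree G :=
  gapFree_c4Free_diamondFree_of_clique_structure_general G H hclique hout hnoout
end

section
/- Let G be a finite simple connected graph that is gap-free, C4-free, and diamond-free. Then G has at most one maximal clique of size at least 3. -/
/-- A maximal clique of `G`. -/
def IsMaximalClique {V : Type*} (G : SimpleGraph V) (H : Finset V) : Prop :=
  G.IsClique (H : Set V) ∧ ∀ K : Finset V, G.IsClique (K : Set V) → H ⊆ K → H = K

section

open Finset

variable {V : Type*} {G : SimpleGraph V} {H K : Finset V}

theorem IsMaximalClique.exists_not_adj (hH : IsMaximalClique G H) {y : V} (hy : y ∉ H) :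
    ∃ z ∈ H, ¬ G.Adj y z := by
  classical
  by_contra! h
  have hclique : G.IsClique (insert y H : Finset V) := by
    rw [coe_insert]
    exact hH.1.insert fun z hz _ => h z hz
  exact hy (hH.2 _ hclique (subset_insert y H) ▸ mem_insert_self y H)

theorem DiamondFree.eq_of_adj_of_adj (hdia : DiamondFree G) (hH : IsMaximalClique G H)
    {y x x' : V} (hy : y ∉ H) (hx : x ∈ H) (hx' : x' ∈ H) (h : G.Adj y x) (h' : G.Adj y x') :
    x = x' := by
  by_contra hne
  obtain ⟨z, hz, hyz⟩ := hH.exists_not_adj hy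
  have hzx : z ≠ x := by rintro rfl; exact hyz h
  have hzx' : z ≠ x' := by rintro rfl; exact hyz h'
  exact hdia ⟨x, z, x', y, ne_of_mem_of_not_mem hz hy, hH.1 hx hz hzx.symm, hH.1 hz hx' hzx',
    h'.symm, h, hH.1 hx hx' hne, fun hzy => hyz hzy.symm⟩

theorem DiamondFree.card_inter_le_one [DecidableEq V] (hdia : DiamondFree G)
    (hH : IsMaximalClique G H) (hK : IsMaximalClique G K) (hne : H ≠ K) : #(H ∩ K) ≤ 1 := by
  obtain ⟨b, hbH, hbK⟩ := not_subset.mp (mt (hH.2 K hK.1) hne)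
  rw [card_le_one]
  intro a ha c hc
  rw [mem_inter] at ha hc
  exact hdia.eq_of_adj_of_adj hK hbK ha.2 hc.2
    (hH.1 hbH ha.1 (ne_of_mem_of_not_mem ha.2 hbK).symm)
    (hH.1 hbH hc.1 (ne_of_mem_of_not_mem hc.2 hbK).symm)

theorem DiamondFree.disjoint_of_adj (hdia : DiamondFree G) (hH : IsMaximalClique G H)
    (hK : IsMaximalClique G K) {x y : V} (hxH : x ∈ H) (hxK : x ∉ K) (hyK : y ∈ K) (hyH : y ∉ H)
    (hxy : G.Adj x y) : Disjoint H K := by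
  rw [disjoint_left]
  intro v hvH hvK
  have hxv : x = v := hdia.eq_of_adj_of_adj hH hyH hxH hvH hxy.symm
    (hK.1 hyK hvK (ne_of_mem_of_not_mem hvH hyH).symm)
  exact hxK (hxv ▸ hvK)

theorem GapFree.exists_adj_of_disjoint (hgap : GapFree G) {A B : Finset V}
    (hA : G.IsClique (A : Set V)) (hB : G.IsClique (B : Set V)) (hAB : Disjoint A B)
    (hA2 : 2 ≤ #A) (hB2 : 2 ≤ #B) : ∃ x ∈ A, ∃ y ∈ B, G.Adj x y := by
  by_contra! h
  obtain ⟨a, ha, b, hb, hab⟩ := one_lt_card.mp hA2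
  obtain ⟨c, hc, d, hd, hcd⟩ := one_lt_card.mp hB2
  have hne := disjoint_iff_ne.mp hAB
  exact hgap ⟨a, b, c, d, hA ha hb hab, hB hc hd hcd, hne a ha c hc, hne a ha d hd,
    hne b hb c hc, hne b hb d hd, h a ha c hc, h a ha d hd, h b hb c hc, h b hb d hd⟩

theorem C4Free.eq_of_adj_of_adj (hc4 : C4Free G) (hdia : DiamondFree G)
    (hH : IsMaximalClique G H) (hK : IsMaximalClique G K) (hHK : Disjoint H K)
    {x₁ x₂ y₁ y₂ : V} (hx₁ : x₁ ∈ H) (hx₂ : x₂ ∈ H) (hy₁ : y₁ ∈ K) (hy₂ : y₂ ∈ K)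
    (h₁ : G.Adj x₁ y₁) (h₂ : G.Adj x₂ y₂) : x₁ = x₂ := by
  by_contra hx
  have hy₁H : y₁ ∉ H := disjoint_right.mp hHK hy₁
  have hy : y₁ ≠ y₂ := by
    rintro rfl
    exact hx (hdia.eq_of_adj_of_adj hH hy₁H hx₁ hx₂ h₁.symm h₂.symm)
  have hne := disjoint_iff_ne.mp hHK
  exact hc4 ⟨x₁, x₂, y₂, y₁, hne x₁ hx₁ y₂ hy₂, hne x₂ hx₂ y₁ hy₁, hH.1 hx₁ hx₂ hx, h₂,
    hK.1 hy₂ hy₁ hy.symm, h₁.symm,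
    fun h => hy (hdia.eq_of_adj_of_adj hK (disjoint_left.mp hHK hx₁) hy₁ hy₂ h₁ h),
    fun h => hx (hdia.eq_of_adj_of_adj hH hy₁H hx₁ hx₂ h₁.symm h.symm)⟩

end

theorem at_most_one_big_maximal_clique_general {V : Type*}
    (G : SimpleGraph V)
    (hgap : GapFree G) (hc4 : C4Free G) (hdia : DiamondFree G) :
    ∀ H K : Finset V, IsMaximalClique G H → IsMaximalClique G K →
      3 ≤ H.card → 3 ≤ K.card → H = K := by
  classical
  intro H K hH hK hH3 hK3
  by_contra hne
  have hH2 : 2 ≤ (H \ K).card := by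
    have := Finset.card_sdiff_add_card_inter H K
    have := hdia.card_inter_le_one hH hK hne
    omega
  have hK2 : 2 ≤ (K \ H).card := by
    have := Finset.card_sdiff_add_card_inter K H
    have := hdia.card_inter_le_one hK hH (Ne.symm hne)
    omega
  obtain ⟨x₁, hx₁, y₁, hy₁, h₁⟩ := hgap.exists_adj_of_disjoint (hH.1.subset (by simp))
    (hK.1.subset (by simp)) disjoint_sdiff_sdiff hH2 hK2
  rw [Finset.mem_sdiff] at hx₁ hy₁
  have hHK := hdia.disjoint_of_adj hH hK hx₁.1 hx₁.2 hy₁.1 hy₁.2 h₁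
  obtain ⟨x₂, hx₂, y₂, hy₂, h₂⟩ := hgap.exists_adj_of_disjoint (hH.1.subset (by simp))
    (hK.1.subset (by simp)) (hHK.mono (Finset.erase_subset x₁ H) (Finset.erase_subset y₁ K))
    (by rw [Finset.card_erase_of_mem hx₁.1]; omega) (by rw [Finset.card_erase_of_mem hy₁.1]; omega)
  rw [Finset.mem_erase] at hx₂ hy₂
  exact hx₂.1 (hc4.eq_of_adj_of_adj hdia hH hK hHK hx₁.1 hx₂.2 hy₁.1 hy₂.2 h₁ h₂).symm

/-- A connected gap-free, `C4`-free, diamond-free graph has at most one maximal clique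
of size at least 3. -/
theorem at_most_one_big_maximal_clique {V : Type*} [Fintype V] [DecidableEq V]
    (G : SimpleGraph V) (hconn : G.Connected)
    (hgap : GapFree G) (hc4 : C4Free G) (hdia : DiamondFree G) :
    ∀ H K : Finset V, IsMaximalClique G H → IsMaximalClique G K →
      3 ≤ H.card → 3 ≤ K.card → H = K :=
  at_most_one_big_maximal_clique_general G hgap hc4 hdia
end

section
/- For n ≥ 3, the LCM lattice of the edge ideal of the cycle graph C_n is complemented: for every subset Y of vertices that is a union of edges of C_n, the set T = ∪_{i ∉ Y} {i, i+1} (indices mod n) is a union of edges with T ∪ Y equal to all vertices and T ∩ Y containing no edge of C_n. -/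
/-- Adjacency in the cycle graph `C_n` with vertex set `ZMod n`: `i` is adjacent to
`i + 1`. -/
def CycleAdj (n : ℕ) (i j : ZMod n) : Prop :=
  i ≠ j ∧ (j = i + 1 ∨ i = j + 1)

/-! Every vertex of `T ∩ Y` is of the form `i + 1` with `i ∉ Y`, so its predecessor lies outside
`Y`; so no edge `{v, v + 1}` can lie in `T ∩ Y`. -/

namespace CycleAdj

variable {n : ℕ} {i j : ZMod n}

lemma symm (h : CycleAdj n i j) : CycleAdj n j i :=
  ⟨h.1.symm, h.2.symm⟩

lemma self_add_one [Nontrivial (ZMod n)] (i : ZMod n) : CycleAdj n i (i + 1) :=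
  ⟨by simp, Or.inl rfl⟩

lemma sub_one_eq_or_sub_one_eq (h : CycleAdj n i j) : j - 1 = i ∨ i - 1 = j := by
  rcases h.2 with rfl | rfl <;> simp

end CycleAdj

namespace CycleComplement

variable {n : ℕ} {Y T : Finset (ZMod n)} {v : ZMod n}

lemma mem_of_not_mem (hT : ∀ v : ZMod n, v ∈ T ↔ ∃ i : ZMod n, i ∉ Y ∧ (v = i ∨ v = i + 1))
    (hv : v ∉ Y) : v ∈ T :=
  (hT v).2 ⟨v, hv, Or.inl rfl⟩

lemma add_one_mem_of_not_mem
    (hT : ∀ v : ZMod n, v ∈ T ↔ ∃ i : ZMod n, i ∉ Y ∧ (v = i ∨ v = i + 1))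
    (hv : v ∉ Y) : v + 1 ∈ T :=
  (hT _).2 ⟨v, hv, Or.inr rfl⟩

lemma sub_one_not_mem_of_mem_of_mem
    (hT : ∀ v : ZMod n, v ∈ T ↔ ∃ i : ZMod n, i ∉ Y ∧ (v = i ∨ v = i + 1))
    (hvT : v ∈ T) (hvY : v ∈ Y) : v - 1 ∉ Y := by
  obtain ⟨i, hi, rfl | rfl⟩ := (hT v).1 hvT
  · exact absurd hvY hi
  · simpa using hi

lemma exists_mem_cycleAdj [Nontrivial (ZMod n)]
    (hT : ∀ v : ZMod n, v ∈ T ↔ ∃ i : ZMod n, i ∉ Y ∧ (v = i ∨ v = i + 1))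
    (hv : v ∈ T) : ∃ w ∈ T, CycleAdj n v w := by
  obtain ⟨i, hi, rfl | rfl⟩ := (hT v).1 hv
  · exact ⟨v + 1, add_one_mem_of_not_mem hT hi, CycleAdj.self_add_one v⟩
  · exact ⟨i, mem_of_not_mem hT hi, (CycleAdj.self_add_one i).symm⟩

lemma not_cycleAdj_of_mem_inter
    (hT : ∀ v : ZMod n, v ∈ T ↔ ∃ i : ZMod n, i ∉ Y ∧ (v = i ∨ v = i + 1))
    {v w : ZMod n} (hvT : v ∈ T) (hvY : v ∈ Y) (hwT : w ∈ T) (hwY : w ∈ Y) :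
    ¬ CycleAdj n v w := by
  intro h
  rcases h.sub_one_eq_or_sub_one_eq with hw | hv
  · exact sub_one_not_mem_of_mem_of_mem hT hwT hwY (hw ▸ hvY)
  · exact sub_one_not_mem_of_mem_of_mem hT hvT hvY (hv ▸ hwY)

end CycleComplement

theorem cycle_lcm_lattice_complemented_general (n : ℕ) (hn : 3 ≤ n)
    (Y : Finset (ZMod n))
    (T : Finset (ZMod n))
    (hT : ∀ v : ZMod n, v ∈ T ↔ ∃ i : ZMod n, i ∉ Y ∧ (v = i ∨ v = i + 1)) :
    (∀ v ∈ T, ∃ w ∈ T, CycleAdj n v w) ∧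
    (∀ v : ZMod n, v ∈ T ∨ v ∈ Y) ∧
    (∀ v w : ZMod n, v ∈ T → v ∈ Y → w ∈ T → w ∈ Y → ¬ CycleAdj n v w) := by
  have : Nontrivial (ZMod n) := ZMod.nontrivial_iff.2 (by omega)
  refine ⟨fun v hv => CycleComplement.exists_mem_cycleAdj hT hv, fun v => ?_,
    fun v w => CycleComplement.not_cycleAdj_of_mem_inter hT⟩
  by_cases hv : v ∈ Y
  · exact Or.inr hv
  · exact Or.inl (CycleComplement.mem_of_not_mem hT hv)

/-- The LCM lattice of the edge ideal of the cycle `C_n` is complemented: for every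
union-of-edges set `Y`, the set `T = ⋃_{i ∉ Y} {i, i+1}` is a union of edges,
`T ∪ Y` is everything, and `T ∩ Y` contains no edge of `C_n` (so `T` is a complement
of `Y`). -/
theorem cycle_lcm_lattice_complemented (n : ℕ) (hn : 3 ≤ n)
    (Y : Finset (ZMod n)) (hY : ∀ v ∈ Y, ∃ w ∈ Y, CycleAdj n v w)
    (T : Finset (ZMod n))
    (hT : ∀ v : ZMod n, v ∈ T ↔ ∃ i : ZMod n, i ∉ Y ∧ (v = i ∨ v = i + 1)) :
    (∀ v ∈ T, ∃ w ∈ T, CycleAdj n v w) ∧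
    (∀ v : ZMod n, v ∈ T ∨ v ∈ Y) ∧
    (∀ v w : ZMod n, v ∈ T → v ∈ Y → w ∈ T → w ∈ Y → ¬ CycleAdj n v w) :=
  cycle_lcm_lattice_complemented_general n hn Y T hT
end

section
/- For the path graph P_n with n ≡ 1 (mod 3) and n > 1, the LCM lattice of the edge ideal I(P_n) is not complemented: the union-of-edges set Y = {i ∈ [n] : i ≡ 0 or 2 (mod 3)} has no complement. -/
/-!
Every vertex `3m` lies outside `Y`, so a complement `C` contains all of them. Inside `Y` the
edges `{3m+1, 3m+2}` are forbidden to `C`. Walking along the path: `0` has `1` as its only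
neighbour, so `1 ∈ C` and `2 ∉ C`; then `3` must reach `C` through `4`, so `4 ∈ C` and `5 ∉ C`,
and so on. For `n = 3M + 1` the last vertex `3M` can only reach `C` through `3M - 1 ∉ C`.
-/

/-- Adjacency in the path graph `P_n` on vertices `Fin n` (`0`-indexed; the paper's
vertex `i ∈ [n]` corresponds to `i - 1 : Fin n`): `j` is adjacent to `j + 1`. -/
def PathAdj (n : ℕ) (j k : Fin n) : Prop :=
  (j : ℕ) + 1 = (k : ℕ) ∨ (k : ℕ) + 1 = (j : ℕ)

def IsEdgeUnion (n : ℕ) (S : Finset (Fin n)) : Prop :=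
  ∀ v ∈ S, ∃ w ∈ S, PathAdj n v w

theorem isEdgeUnion_of_mem_iff_mod_three_ne_zero {n : ℕ} (h3 : n % 3 = 1) {Y : Finset (Fin n)}
    (hY : ∀ k : Fin n, k ∈ Y ↔ (k : ℕ) % 3 ≠ 0) : IsEdgeUnion n Y := by
  intro v hv
  rw [hY] at hv
  have hvn := v.isLt
  rcases (by omega : (v : ℕ) % 3 = 1 ∨ (v : ℕ) % 3 = 2) with h | h
  · exact ⟨⟨v + 1, by omega⟩, by rw [hY]; simp only; omega, Or.inl rfl⟩
  · exact ⟨⟨v - 1, by omega⟩, by rw [hY]; simp only; omega,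
      Or.inr (Nat.sub_add_cancel (by omega))⟩

theorem IsEdgeUnion.succ_mem_or_pred_mem_image_val {n : ℕ} {C : Finset (Fin n)}
    (hC : IsEdgeUnion n C) :
    ∀ k ∈ Fin.val '' (C : Set (Fin n)), k + 1 ∈ Fin.val '' (C : Set (Fin n)) ∨
      ∃ j ∈ Fin.val '' (C : Set (Fin n)), j + 1 = k := by
  rintro _ ⟨v, hv, rfl⟩
  obtain ⟨w, hw, hvw | hwv⟩ := hC v hv
  · exact Or.inl ⟨w, hw, hvw.symm⟩
  · exact Or.inr ⟨w, ⟨w, hw, rfl⟩, hwv⟩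

/- `s` stands for the vertex indices of a complement: a union of edges of the path that contains
every multiple of `3` and no edge `{3m+1, 3m+2}`. -/
theorem three_mul_add_one_mem_of_three_mul_mem {n : ℕ} {s : Set ℕ}
    (hnbr : ∀ k ∈ s, k + 1 ∈ s ∨ ∃ j ∈ s, j + 1 = k)
    (hmul : ∀ m, 3 * m < n → 3 * m ∈ s)
    (hsep : ∀ m, 3 * m + 1 ∈ s → 3 * m + 2 ∉ s) :
    ∀ m, 3 * m + 1 < n → 3 * m + 1 ∈ s := by
  intro m
  induction m with
  | zero =>
    intro hn
    obtain h | ⟨j, -, hj⟩ := hnbr 0 (hmul 0 (by omega))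
    · exact h
    · omega
  | succ m ih =>
    intro hn
    obtain h | ⟨j, hj, hj3⟩ := hnbr (3 * (m + 1)) (hmul (m + 1) (by omega))
    · exact h
    · obtain rfl : j = 3 * m + 2 := by omega
      exact absurd hj (hsep m (ih (by omega)))

theorem mod_three_ne_one_of_three_mul_mem {n : ℕ} {s : Set ℕ} (hlt : ∀ k ∈ s, k < n)
    (hnbr : ∀ k ∈ s, k + 1 ∈ s ∨ ∃ j ∈ s, j + 1 = k)
    (hmul : ∀ m, 3 * m < n → 3 * m ∈ s)
    (hsep : ∀ m, 3 * m + 1 ∈ s → 3 * m + 2 ∉ s) :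
    n % 3 ≠ 1 := by
  intro h3
  obtain ⟨M, rfl⟩ : ∃ M, n = 3 * M + 1 := ⟨n / 3, by omega⟩
  obtain h | ⟨j, hj, hjM⟩ := hnbr (3 * M) (hmul M (by omega))
  · exact absurd (hlt _ h) (lt_irrefl _)
  · obtain ⟨m, rfl⟩ : ∃ m, M = m + 1 := ⟨M - 1, by omega⟩
    obtain rfl : j = 3 * m + 2 := by omega
    exact hsep m (three_mul_add_one_mem_of_three_mul_mem hnbr hmul hsep m (by omega)) hj

theorem path_lcm_lattice_not_complemented_general (n : ℕ) (h3 : n % 3 = 1)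
    (Y : Finset (Fin n)) (hY : ∀ k : Fin n, k ∈ Y ↔ (k : ℕ) % 3 ≠ 0) :
    (∀ v ∈ Y, ∃ w ∈ Y, PathAdj n v w) ∧
    ¬ ∃ C : Finset (Fin n),
        (∀ v ∈ C, ∃ w ∈ C, PathAdj n v w) ∧
        (∀ v : Fin n, v ∈ C ∨ v ∈ Y) ∧
        (∀ v w : Fin n, v ∈ C → v ∈ Y → w ∈ C → w ∈ Y → ¬ PathAdj n v w) := by
  refine ⟨isEdgeUnion_of_mem_iff_mod_three_ne_zero h3 hY, ?_⟩
  rintro ⟨C, hC, hcov, hsep⟩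
  refine mod_three_ne_one_of_three_mul_mem (s := Fin.val '' (C : Set (Fin n))) ?_
    (IsEdgeUnion.succ_mem_or_pred_mem_image_val hC) ?_ ?_ h3
  · rintro _ ⟨v, -, rfl⟩
    exact v.isLt
  · intro m hm
    exact ⟨⟨3 * m, hm⟩, (hcov _).resolve_right (by rw [hY]; simp), rfl⟩
  · rintro m ⟨v, hv, hv1⟩ ⟨w, hw, hw2⟩
    exact hsep v w hv (by rw [hY]; omega) hw (by rw [hY]; omega) (Or.inl (by omega))

/-- For `n ≡ 1 (mod 3)`, `n > 1`, the LCM lattice of `I(P_n)` is not complemented: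
the union-of-edges set `Y = {i ∈ [n] : i ≡ 0 or 2 (mod 3)}` (in `0`-indexed form,
`Y = {k : k % 3 ≠ 0}`) has no complement `C`, i.e. there is no union-of-edges set `C`
with `C ∪ Y = [n]` and `C ∩ Y` containing no edge of `P_n`. -/
theorem path_lcm_lattice_not_complemented (n : ℕ) (h1 : 1 < n) (h3 : n % 3 = 1)
    (Y : Finset (Fin n)) (hY : ∀ k : Fin n, k ∈ Y ↔ (k : ℕ) % 3 ≠ 0) :
    (∀ v ∈ Y, ∃ w ∈ Y, PathAdj n v w) ∧
    ¬ ∃ C : Finset (Fin n),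
        (∀ v ∈ C, ∃ w ∈ C, PathAdj n v w) ∧
        (∀ v : Fin n, v ∈ C ∨ v ∈ Y) ∧
        (∀ v w : Fin n, v ∈ C → v ∈ Y → w ∈ C → w ∈ Y → ¬ PathAdj n v w) :=
  path_lcm_lattice_not_complemented_general n h3 Y hY
end
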